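/- Let B be a unital C*-algebra, let u ∈ B be a nonzero projection (u = star u and u * u = u), and let x ∈ B satisfy u * x = x. Then ‖u + x * star x‖ = 1 + ‖x‖². -/
import Mathlib


/-- The norm computation in Lemma 5.1: if `u` is a nonzero projection in a unital
C*-algebra `B` and `x ∈ B` satisfies `u x = x`, then `‖u + x x*‖ = 1 + ‖x‖²`. -/
theorem norm_proj_add_mul_star {B : Type*} [CStarAlgebra B] (u x : B)
    (hu0 : u ≠ 0) (hu_sa : star u = u) (hu_idem : u * u = u) (hx : u * x = x) :
    ‖u + x * star x‖ = 1 + ‖x‖ ^ 2 := by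
  letI := CStarAlgebra.spectralOrder B
  letI := CStarAlgebra.spectralOrderedRing B
  have hB : Nontrivial B := ⟨u, 0, hu0⟩
  have hnu : ‖u‖ = 1 := by
    have h1 : ‖u‖ * ‖u‖ = ‖u‖ := by
      rw [← CStarRing.norm_star_mul_self (x := u), hu_sa, hu_idem]
    have h0 : ‖u‖ ≠ 0 := norm_ne_zero_iff.mpr hu0
    exact mul_left_cancel₀ h0 (h1.trans (mul_one ‖u‖).symm)
  set p := x * star x with hp
  have hnp : ‖p‖ = ‖x‖ ^ 2 := by rw [hp, CStarRing.norm_self_mul_star, sq]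
  have hup : u * p = p := by rw [hp, ← mul_assoc, hx]
  have hppos : 0 ≤ p := mul_star_self_nonneg x
  have hub : ‖u + p‖ ≤ 1 + ‖x‖ ^ 2 := by
    calc ‖u + p‖ ≤ ‖u‖ + ‖p‖ := norm_add_le _ _
    _ = 1 + ‖x‖ ^ 2 := by rw [hnu, hnp]
  rcases eq_or_ne x 0 with rfl | hx0
  · simp [hp, hnu]
  have hpt : ‖p‖ ≠ 0 := by
    rw [hnp]; exact pow_ne_zero _ (norm_ne_zero_iff.mpr hx0)
  have hmem : ‖p‖ ∈ spectrum ℝ p := CStarAlgebra.norm_mem_spectrum_of_nonneg hppos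
  have hcfc : p + p * p = cfc (fun s : ℝ => s + s * s) p := by
    rw [cfc_add _ _ _ (by fun_prop) (by fun_prop), cfc_id' ℝ p,
      cfc_mul _ _ _ (by fun_prop) (by fun_prop), cfc_id' ℝ p]
  have hmem2 : ‖p‖ + ‖p‖ * ‖p‖ ∈ spectrum ℝ (p + p * p) := by
    rw [hcfc, cfc_map_spectrum (fun s : ℝ => s + s * s) p]
    exact ⟨‖p‖, hmem, rfl⟩
  have h1 : ‖p‖ + ‖p‖ * ‖p‖ ≤ ‖p + p * p‖ := by
    have := spectrum.norm_le_norm_of_mem hmem2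
    rwa [Real.norm_of_nonneg (by positivity)] at this
  have h2 : (u + p) * p = p + p * p := by rw [add_mul, hup]
  have h3 : ‖p + p * p‖ ≤ ‖u + p‖ * ‖p‖ := by rw [← h2]; exact norm_mul_le _ _
  have hlb : 1 + ‖x‖ ^ 2 ≤ ‖u + p‖ := by
    rw [← hnp]
    have h4 := h1.trans h3
    have hppos' : 0 < ‖p‖ := lt_of_le_of_ne (norm_nonneg p) (Ne.symm hpt)
    nlinarith
  linarith
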